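/- The map H defined by (Hf)(t) = 2f(2t − 1/2) for 1/4 < t < 3/4 and (Hf)(t) = 0 otherwise is a linear isometry from L^1[0,1] onto the subspace of functions supported in (1/4,3/4), where the target carries the norm ‖g‖* = ‖g·χ_{[0,1/4]∪[3/4,1]}‖_{C(p)} + ‖g·χ_{(1/4,3/4)}‖_{L^1}; in particular ‖Hf‖* = ‖f‖_{L^1} for all f ∈ L^1[0,1]. -/

import Mathlib

open MeasureTheory Set

/-- The Cesàro norm on `[0,1]`. -/
noncomputable def cesNorm (p : ℝ) (f : ℝ → ℝ) : ℝ :=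
  (∫ x in Set.Ioc (0 : ℝ) 1, ((1 / x) * ∫ t in Set.Ioc (0 : ℝ) x, |f t|) ^ p) ^ (1 / p)

/-- The equivalent norm `‖g‖* = ‖g·χ_{[0,1/4]∪[3/4,1]}‖_{C(p)} + ‖g·χ_{(1/4,3/4)}‖_{L^1}`. -/
noncomputable def starNorm (p : ℝ) (f : ℝ → ℝ) : ℝ :=
  cesNorm p ((Set.Icc (0 : ℝ) (1/4) ∪ Set.Icc (3/4 : ℝ) 1).indicator f)
    + ∫ t in Set.Ioo (1/4 : ℝ) (3/4), |f t|

/-- The map `(Hf)(t) = 2f(2t - 1/2)` on `(1/4,3/4)`, `0` elsewhere. -/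
noncomputable def Hmap (f : ℝ → ℝ) : ℝ → ℝ := fun t =>
  if t ∈ Set.Ioo (1/4 : ℝ) (3/4) then 2 * f (2 * t - 1/2) else 0

/-!
`H` vanishes off `(1/4, 3/4)`, so the Cesàro part of `‖H f‖*` is the Cesàro norm of `0`, which
is `0`. What remains is `∫_{1/4}^{3/4} 2 |f (2t - 1/2)| dt`, and the substitution `u = 2t - 1/2`
maps `(1/4, 3/4)` onto `(0, 1)` with Jacobian `2`, turning it into `‖f‖_{L¹}`. The inverse of
`H` on functions supported in `(1/4, 3/4)` is `g ↦ (u ↦ g (u/2 + 1/4) / 2)`.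
-/

theorem setIntegral_Ioo_comp_mul_sub {a b c : ℝ} (hab : a ≤ b) (hc : 0 < c) (d : ℝ)
    (g : ℝ → ℝ) :
    ∫ t in Ioo a b, c * g (c * t - d) = ∫ u in Ioc (c * a - d) (c * b - d), g u := by
  have hcab : c * a - d ≤ c * b - d := by gcongr
  rw [← integral_Ioc_eq_integral_Ioo, ← intervalIntegral.integral_of_le hab,
    intervalIntegral.integral_const_mul, intervalIntegral.integral_comp_mul_sub g hc.ne',
    intervalIntegral.integral_of_le hcab, smul_eq_mul, mul_inv_cancel_left₀ hc.ne']

theorem cesNorm_zero {p : ℝ} (hp : p ≠ 0) : cesNorm p 0 = 0 := by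
  simp [cesNorm, Real.zero_rpow hp, Real.zero_rpow (inv_ne_zero hp)]

namespace Hmap

theorem map_add (f g : ℝ → ℝ) : Hmap (f + g) = Hmap f + Hmap g := by
  funext t
  simp only [Hmap, Pi.add_apply]
  split_ifs <;> ring

theorem map_smul (c : ℝ) (f : ℝ → ℝ) : Hmap (c • f) = c • Hmap f := by
  funext t
  simp only [Hmap, Pi.smul_apply, smul_eq_mul]
  split_ifs <;> ring

theorem support_subset (f : ℝ → ℝ) : Function.support (Hmap f) ⊆ Ioo (1/4 : ℝ) (3/4) := by
  intro t ht
  by_contra hnt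
  exact ht (if_neg hnt)

theorem indicator_outer_eq_zero (f : ℝ → ℝ) :
    (Icc (0 : ℝ) (1/4) ∪ Icc (3/4 : ℝ) 1).indicator (Hmap f) = 0 := by
  refine indicator_eq_zero'.mpr (Disjoint.mono_left (support_subset f) ?_)
  rw [disjoint_union_right]
  constructor <;>
    exact disjoint_left.mpr fun t ht ht' => by linarith [ht.1, ht.2, ht'.1, ht'.2]

theorem integral_abs (f : ℝ → ℝ) :
    ∫ t in Ioo (1/4 : ℝ) (3/4), |Hmap f t| = ∫ t in Ioc (0 : ℝ) 1, |f t| := by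
  have hHf : ∀ t ∈ Ioo (1/4 : ℝ) (3/4), |Hmap f t| = 2 * |f (2 * t - 1/2)| := fun t ht => by
    simp only [Hmap, if_pos ht, abs_mul, abs_two]
  rw [setIntegral_congr_fun measurableSet_Ioo hHf,
    setIntegral_Ioo_comp_mul_sub (by norm_num) two_pos _ fun u => |f u|]
  norm_num

theorem starNorm_eq {p : ℝ} (hp : p ≠ 0) (f : ℝ → ℝ) :
    starNorm p (Hmap f) = ∫ t in Ioc (0 : ℝ) 1, |f t| := by
  rw [starNorm, indicator_outer_eq_zero, cesNorm_zero hp, integral_abs, zero_add]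

theorem map_comp_inv_affine {g : ℝ → ℝ} (hg : Function.support g ⊆ Ioo (1/4 : ℝ) (3/4)) :
    Hmap (fun u => g (u / 2 + 1/4) / 2) = g := by
  funext t
  by_cases ht : t ∈ Ioo (1/4 : ℝ) (3/4)
  · simp only [Hmap, if_pos ht]
    rw [show (2 * t - 1/2) / 2 + 1/4 = t by ring]
    ring
  · rw [Hmap, if_neg ht, eq_comm, ← Function.notMem_support]
    exact fun h => ht (hg h)

end Hmap

/-- `H` is a linear isometry from `L^1[0,1]` onto the subspace of functions supported in
`(1/4,3/4)`, the target carrying the norm `‖·‖*`; in particular `‖Hf‖* = ‖f‖_{L^1}`. -/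
theorem Hmap_isometry_onto (p : ℝ) (hp : 1 ≤ p) :
    (∀ f g : ℝ → ℝ, Hmap (f + g) = Hmap f + Hmap g) ∧
    (∀ (c : ℝ) (f : ℝ → ℝ), Hmap (c • f) = c • Hmap f) ∧
    (∀ f : ℝ → ℝ, Measurable f → IntegrableOn f (Set.Ioc (0 : ℝ) 1) →
      starNorm p (Hmap f) = ∫ t in Set.Ioc (0 : ℝ) 1, |f t|) ∧
    (∀ g : ℝ → ℝ, Function.support g ⊆ Set.Ioo (1/4 : ℝ) (3/4) → ∃ f : ℝ → ℝ, Hmap f = g) :=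
  ⟨Hmap.map_add, Hmap.map_smul,
    fun f _ _ => Hmap.starNorm_eq (by positivity) f,
    fun _ hg => ⟨_, Hmap.map_comp_inv_affine hg⟩⟩
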